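/- arXiv:1811.07765 — 5 statements merged into one kernel-verified Lean document; each statement's English description precedes it below -/
import Mathlib

section
/- Let V = {x_1 < x_2 < ... < x_{|V|}} ⊆ [-1,1] be a finite set of weight values and let halfspace queries over [-1,1]^d be q_w(x) = 1[w·x ≥ 1] for w ∈ V^d. Then there exists a separator set of size (|V|-1)·d for the class {q_w : w ∈ V^d}. Concretely, choosing for each v ∈ {1,...,|V|-1} a constant c_v ∈ [1/x_{v+1}, 1/x_v) (whenever defined), the vectors s_{j,v} with value c_v in coordinate j and 0 elsewhere form such a separator set. -/
/-- For discrete halfspaces `q_w(x) = 1[w·x ≥ 1]` with weights taking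
values `x 0 < x 1 < ... < x (k-1)` in `[-1,1]`, the `(k-1)·d` vectors `s_{j,v}`
(value `c v` in coordinate `j`, zero elsewhere), where `c v ∈ [1/x (v+1), 1/x v)`
(expressed multiplicatively: `x l * c v < 1` for `l ≤ v` and `x m * c v ≥ 1` for
`m > v`), form a separator set for the halfspace class. -/
theorem stmt4 (d k : ℕ) (hd : 1 ≤ d) (hk : 1 ≤ k)
    (x : Fin k → ℝ) (hmono : StrictMono x) (hrange : ∀ v, x v ∈ Set.Icc (-1 : ℝ) 1)
    (c : Fin k → ℝ)
    (hc : ∀ v : Fin k, (v : ℕ) + 1 < k →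
      (∀ l : Fin k, (l : ℕ) ≤ (v : ℕ) → x l * c v < 1) ∧
        (∀ m : Fin k, (v : ℕ) < (m : ℕ) → 1 ≤ x m * c v)) :
    ∀ w w' : Fin d → Fin k, w ≠ w' →
      ∃ (j : Fin d) (v : Fin k), (v : ℕ) + 1 < k ∧
        ¬ ((1 ≤ ∑ i, x (w i) * (if i = j then c v else 0)) ↔
            (1 ≤ ∑ i, x (w' i) * (if i = j then c v else 0))) := by
  intro w w' hne
  obtain ⟨j, hj⟩ : ∃ j, w j ≠ w' j := by
    by_contra h; push_neg at h; exact hne (funext h)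
  have hsum : ∀ (u : Fin d → Fin k) (v : Fin k),
      ∑ i, x (u i) * (if i = j then c v else 0) = x (u j) * c v := by
    intro u v
    simp [mul_ite, mul_zero, Finset.sum_ite_eq']
  rcases lt_or_gt_of_ne hj with h | h
  · refine ⟨j, w j, lt_of_le_of_lt (Nat.succ_le_of_lt h) (w' j).isLt, ?_⟩
    rw [hsum, hsum]
    have hv := hc (w j) (lt_of_le_of_lt (Nat.succ_le_of_lt h) (w' j).isLt)
    have h1 := hv.1 (w j) le_rfl
    have h2 := hv.2 (w' j) h
    intro hiff
    exact absurd (hiff.mpr h2) (not_le.mpr h1)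
  · refine ⟨j, w' j, lt_of_le_of_lt (Nat.succ_le_of_lt h) (w j).isLt, ?_⟩
    rw [hsum, hsum]
    have hv := hc (w' j) (lt_of_le_of_lt (Nat.succ_le_of_lt h) (w j).isLt)
    have h1 := hv.1 (w' j) le_rfl
    have h2 := hv.2 (w j) h
    intro hiff
    exact absurd (hiff.mp h2) (not_le.mpr h1)
end

section
/- Let Q have a separator set of size m and let η_1, ..., η_m be i.i.d. Laplace with scale m/ε. With probability at least 1 − β, max_i |η_i| ≤ (m/ε)·log(m/β), and on this event the query q' returned by exactly minimizing over the weighted dataset WD(S,η) = {(x,1) : x ∈ S} ∪ {(e_i, η_i)} satisfies q'(S) ≤ min_{q∈Q} q(S) + 2 m² log(m/β)/(ε n), where q(S) = (1/n) Σ_{x∈S} q(x) for a dataset S of size n. -/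
open MeasureTheory

/-- The Laplace distribution on `ℝ` with scale `b`, as a measure with density
`(1/(2b)) exp(-|z|/b)` with respect to Lebesgue measure. -/
noncomputable def lapMeasure (b : ℝ) : Measure ℝ :=
  volume.withDensity fun z => ENNReal.ofReal ((1 / (2 * b)) * Real.exp (-|z| / b))

/-- `m` i.i.d. Laplace random variables with scale `b`. -/
noncomputable def lapPi (m : ℕ) (b : ℝ) : Measure (Fin m → ℝ) :=
  Measure.pi fun _ => lapMeasure b

lemma exp_int (b t : ℝ) (hb : 0 < b) :
    ∫ x in (0:ℝ)..t, Real.exp (-x / b) = b * (1 - Real.exp (-t / b)) := by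
  have key := intervalIntegral.integral_comp_div (a := 0) (b := t) (c := b)
    (fun y => Real.exp (-y)) hb.ne'
  simp only [neg_div] at key ⊢
  rw [key]
  have key2 := intervalIntegral.integral_comp_neg (a := (0:ℝ)/b) (b := t/b)
    (fun y => Real.exp y)
  rw [key2]
  simp [integral_exp, neg_div, mul_sub, mul_comm]

lemma lap_Icc (b t : ℝ) (hb : 0 < b) (ht : 0 ≤ t) :
    lapMeasure b (Set.Icc (-t) t) = ENNReal.ofReal (1 - Real.exp (-t / b)) := by
  have hcont : Continuous fun z : ℝ => (1 / (2 * b)) * Real.exp (-|z| / b) := by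
    continuity
  rw [lapMeasure, withDensity_apply _ measurableSet_Icc]
  rw [← ofReal_integral_eq_lintegral_ofReal
    (hcont.integrableOn_Icc)
    (ae_of_all _ fun x => by positivity)]
  congr 1
  rw [integral_Icc_eq_integral_Ioc, ← intervalIntegral.integral_of_le (by linarith)]
  rw [intervalIntegral.integral_const_mul]
  have hsplit : (∫ x in (-t)..t, Real.exp (-|x| / b)) =
      (∫ x in (-t)..(0:ℝ), Real.exp (-|x| / b)) + ∫ x in (0:ℝ)..t, Real.exp (-|x| / b) := by
    rw [intervalIntegral.integral_add_adjacent_intervals] <;>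
      exact (Continuous.intervalIntegrable (by continuity) _ _)
  have h1 : (∫ x in (0:ℝ)..t, Real.exp (-|x| / b)) = ∫ x in (0:ℝ)..t, Real.exp (-x / b) := by
    apply intervalIntegral.integral_congr
    intro x hx
    rw [Set.uIcc_of_le (by linarith)] at hx
    show Real.exp (-|x| / b) = Real.exp (-x / b)
    rw [abs_of_nonneg hx.1]
  have h2 : (∫ x in (-t)..(0:ℝ), Real.exp (-|x| / b)) = ∫ x in (0:ℝ)..t, Real.exp (-x / b) := by
    have := intervalIntegral.integral_comp_neg (a := (0:ℝ)) (b := t)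
      (fun x => Real.exp (-|x| / b))
    simp only [abs_neg, neg_zero] at this
    rw [← this]
    apply intervalIntegral.integral_congr
    intro x hx
    rw [Set.uIcc_of_le (by linarith)] at hx
    show Real.exp (-|x| / b) = Real.exp (-x / b)
    rw [abs_of_nonneg hx.1]
  rw [hsplit, h1, h2, exp_int b t hb]
  field_simp
  ring

instance lapMeasure_sigmaFinite (b : ℝ) : SigmaFinite (lapMeasure b) := by
  unfold lapMeasure; infer_instance

/-- accuracy of the Report Separator-Perturbed Min algorithm. With
probability at least `1-β`, all `m` Laplace perturbations (scale `m/ε`) are bounded by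
`(m/ε) log(m/β)`, and whenever the perturbations are so bounded, any exact minimizer
`q'` of the perturbed weighted objective satisfies
`q'(S) ≤ min_{q ∈ Q} q(S) + 2 m² log(m/β)/(ε n)`. -/
theorem stmt9 {X : Type*} (Q : Finset (X → Bool)) (hQne : Q.Nonempty)
    (m n : ℕ) (hm : 1 ≤ m) (hn : 1 ≤ n) (ε β : ℝ) (hε : 0 < ε) (hβ0 : 0 < β) (hβ1 : β ≤ 1)
    (e : Fin m → X)
    (hsep : ∀ q ∈ Q, ∀ q' ∈ Q, q ≠ q' → ∃ i, q (e i) ≠ q' (e i))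
    (S : Fin n → X) :
    ENNReal.ofReal (1 - β) ≤
        lapPi m (m / ε) {η : Fin m → ℝ | ∀ i, |η i| ≤ (m / ε) * Real.log (m / β)} ∧
      ∀ η : Fin m → ℝ, (∀ i, |η i| ≤ (m / ε) * Real.log (m / β)) →
        ∀ q' ∈ Q,
          (∀ q ∈ Q,
            (∑ i, (if q' (S i) then (1 : ℝ) else 0)) +
                ∑ j, η j * (if q' (e j) then (1 : ℝ) else 0) ≤
              (∑ i, (if q (S i) then (1 : ℝ) else 0)) +
                ∑ j, η j * (if q (e j) then (1 : ℝ) else 0)) →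
          ∀ q ∈ Q,
            (∑ i, (if q' (S i) then (1 : ℝ) else 0)) / n ≤
              (∑ i, (if q (S i) then (1 : ℝ) else 0)) / n +
                2 * m ^ 2 * Real.log (m / β) / (ε * n) := by
  have hm' : (1:ℝ) ≤ m := by exact_mod_cast hm
  have hn' : (0:ℝ) < n := by exact_mod_cast Nat.lt_of_lt_of_le Nat.zero_lt_one hn
  set b : ℝ := m / ε with hbdef
  have hb : 0 < b := by positivity
  set L : ℝ := Real.log (m / β) with hLdef
  have hL : 0 ≤ L := Real.log_nonneg (by rw [le_div_iff₀ hβ0]; linarith)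
  set t : ℝ := b * L with htdef
  have ht : 0 ≤ t := by positivity
  constructor
  · have hset : {η : Fin m → ℝ | ∀ i, |η i| ≤ t} =
        Set.pi Set.univ (fun _ : Fin m => Set.Icc (-t) t) := by
      ext η
      simp only [Set.mem_setOf_eq, Set.mem_pi, Set.mem_univ, forall_true_left, Set.mem_Icc,
        abs_le, true_implies]
    rw [lapPi, hset, Measure.pi_pi]
    have hval : ∀ i : Fin m, lapMeasure b (Set.Icc (-t) t) = ENNReal.ofReal (1 - β / m) := by
      intro _
      rw [lap_Icc b t hb ht]
      congr 1
      have : -t / b = -L := by rw [htdef, neg_div, mul_div_cancel_left₀ _ hb.ne']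
      rw [this, Real.exp_neg, Real.exp_log (by positivity), inv_div]
    rw [Finset.prod_congr rfl (fun i _ => hval i), Finset.prod_const, Finset.card_univ,
      Fintype.card_fin]
    have hβm : β / m ≤ 1 := by
      rw [div_le_one (by positivity)]; linarith
    rw [← ENNReal.ofReal_pow (by linarith)]
    apply ENNReal.ofReal_le_ofReal
    have hd : 0 ≤ β / m := by positivity
    have := one_add_mul_le_pow (a := -(β / m)) (by linarith) m
    have hmm : (m:ℝ) * (β / m) = β := by field_simp
    calc 1 - β = 1 + (m:ℝ) * (-(β/m)) := by rw [mul_neg, hmm]; ring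
      _ ≤ (1 + -(β/m)) ^ m := this
      _ = (1 - β/m) ^ m := by ring_nf
  · intro η hη q' hq' hmin q hq
    have h := hmin q hq
    have hP : (∑ j, η j * (if q (e j) then (1:ℝ) else 0)) -
        (∑ j, η j * (if q' (e j) then (1:ℝ) else 0)) ≤ m * t := by
      rw [← Finset.sum_sub_distrib]
      calc ∑ j, (η j * (if q (e j) then (1:ℝ) else 0) -
              η j * (if q' (e j) then (1:ℝ) else 0)) ≤ ∑ _j : Fin m, t := by
            apply Finset.sum_le_sum
            intro j _
            have h1 : η j * (if q (e j) then (1:ℝ) else 0) -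
                η j * (if q' (e j) then (1:ℝ) else 0) =
                η j * ((if q (e j) then (1:ℝ) else 0) - (if q' (e j) then (1:ℝ) else 0)) := by
              ring
            rw [h1]
            have h2 : |(if q (e j) then (1:ℝ) else 0) - (if q' (e j) then (1:ℝ) else 0)| ≤ 1 := by
              split_ifs <;> norm_num
            calc η j * ((if q (e j) then (1:ℝ) else 0) - (if q' (e j) then (1:ℝ) else 0))
                ≤ |η j * ((if q (e j) then (1:ℝ) else 0) - (if q' (e j) then (1:ℝ) else 0))| :=
                  le_abs_self _
              _ = |η j| * |(if q (e j) then (1:ℝ) else 0) - (if q' (e j) then (1:ℝ) else 0)| :=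
                  abs_mul _ _
              _ ≤ t * 1 := by
                  apply mul_le_mul (hη j) h2 (abs_nonneg _) ht
              _ = t := mul_one t
        _ = m * t := by rw [Finset.sum_const, Finset.card_univ, Fintype.card_fin, nsmul_eq_mul]
    have key : (∑ i, (if q' (S i) then (1:ℝ) else 0)) ≤
        (∑ i, (if q (S i) then (1:ℝ) else 0)) + m * t := by linarith
    have hmt : (m:ℝ) * t = m ^ 2 * L / ε := by
      rw [htdef, hbdef]; field_simp
    calc (∑ i, (if q' (S i) then (1:ℝ) else 0)) / n
        ≤ ((∑ i, (if q (S i) then (1:ℝ) else 0)) + m * t) / n := by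
          gcongr
      _ = (∑ i, (if q (S i) then (1:ℝ) else 0)) / n + (m ^ 2 * L / ε) / n := by
          rw [add_div, hmt]
      _ ≤ (∑ i, (if q (S i) then (1:ℝ) else 0)) / n + 2 * m ^ 2 * L / (ε * n) := by
          rw [div_div]
          gcongr
          nlinarith [sq_nonneg (m:ℝ), hL]
end

section
/- Let S be a set of n elements and sample k ≤ n elements from S uniformly without replacement; let X_i ∈ {0,1} indicate whether element i is sampled. Then (X_1, ..., X_n) satisfies the stochastic covering property: for any I ⊆ [n], J = [n]\I, and a ≥ a' ∈ {0,1}^{|I|} with ||a − a'||_1 = 1, there is a coupling ν of the conditional distributions of (X_j)_{j∈J} given (X_i)_{i∈I} = a and given (X_i)_{i∈I} = a' respectively, such that ν(x,y) = 0 unless x ≤ y coordinatewise and ||x − y||_1 ≤ 1. -/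
open Finset
open scoped ENNReal

lemma uniform_map_of_const_fiber {α β : Type*} [Fintype α] [DecidableEq α] [DecidableEq β]
    (E : Finset α) (C : Finset β) (f : α → β) (m : ℕ) (hm : m ≠ 0)
    (hE : E.Nonempty) (hC : C.Nonempty)
    (hmap : ∀ p ∈ E, f p ∈ C)
    (hdeg : ∀ s ∈ C, (E.filter (fun p => f p = s)).card = m) :
    (PMF.uniformOfFinset E hE).map f = PMF.uniformOfFinset C hC := by
  have hcard : E.card = C.card * m := by
    rw [Finset.card_eq_sum_card_fiberwise hmap, Finset.sum_congr rfl hdeg,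
      Finset.sum_const, smul_eq_mul]
  ext b
  rw [PMF.map_apply, PMF.uniformOfFinset_apply, tsum_fintype]
  trans (∑ p : α, if p ∈ E.filter (fun p => f p = b) then (E.card : ℝ≥0∞)⁻¹ else 0)
  · refine Finset.sum_congr rfl fun p _ => ?_
    rw [PMF.uniformOfFinset_apply]
    by_cases h1 : b = f p <;> by_cases h2 : p ∈ E <;>
      simp [h1, h2, Finset.mem_filter, eq_comm]
  rw [Finset.sum_ite_mem,
    Finset.univ_inter, Finset.sum_const, nsmul_eq_mul]
  by_cases hb : b ∈ C
  · rw [hdeg b hb, if_pos hb, hcard]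
    have hC0 : (C.card : ℝ≥0∞) ≠ 0 := by
      simp [Finset.card_ne_zero_of_mem (hC.choose_spec)]
    have hm0 : (m : ℝ≥0∞) ≠ 0 := by simpa using hm
    push_cast
    rw [ENNReal.mul_inv (Or.inl hC0) (Or.inl (ENNReal.natCast_ne_top _))]
    rw [mul_comm ((C.card : ℝ≥0∞))⁻¹ _, ← mul_assoc,
      ENNReal.mul_inv_cancel hm0 (ENNReal.natCast_ne_top _), one_mul]
  · rw [if_neg hb]
    have : E.filter (fun p => f p = b) = ∅ := by
      rw [Finset.filter_eq_empty_iff]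
      intro p hp h
      exact hb (h ▸ hmap p hp)
    simp [this]


/-- sampling `k` of `n` elements without replacement satisfies the
stochastic covering property. Samples are modeled as uniformly random `k`-subsets of
`Fin n`; conditioning on the indicators on `I` being `a` (resp. `a'`, with `a ≥ a'`
coordinatewise and differing in exactly one coordinate of `I`) gives two distributions
that admit a coupling supported on pairs whose restrictions to `J = Iᶜ` are
coordinatewise comparable and differ in at most one coordinate. -/
theorem stmt11 (n k : ℕ) (hk : k ≤ n) (I : Finset (Fin n)) (a a' : Fin n → Bool)
    (hdom : ∀ i ∈ I, a' i = true → a i = true)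
    (hdiff : (I.filter fun i => a i = true ∧ a' i = false).card = 1)
    (hCa : ((Finset.univ.powersetCard k).filter
      (fun s : Finset (Fin n) => ∀ i ∈ I, (i ∈ s ↔ a i = true))).Nonempty)
    (hCa' : ((Finset.univ.powersetCard k).filter
      (fun s : Finset (Fin n) => ∀ i ∈ I, (i ∈ s ↔ a' i = true))).Nonempty) :
    ∃ ν : PMF (Finset (Fin n) × Finset (Fin n)),
      ν.map Prod.fst = PMF.uniformOfFinset _ hCa ∧
      ν.map Prod.snd = PMF.uniformOfFinset _ hCa' ∧
      ∀ p ∈ ν.support, (p.1 \ I) ⊆ (p.2 \ I) ∧ (p.2 \ I).card ≤ (p.1 \ I).card + 1 := by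
  obtain ⟨i0, hi0⟩ := Finset.card_eq_one.mp hdiff
  have hi0mem : i0 ∈ I.filter (fun i => a i = true ∧ a' i = false) :=
    hi0 ▸ Finset.mem_singleton_self i0
  rw [Finset.mem_filter] at hi0mem
  have hi0I := hi0mem.1
  have hai0 := hi0mem.2.1
  have ha'i0 := hi0mem.2.2
  have hagree : ∀ i ∈ I, i ≠ i0 → (a i = true ↔ a' i = true) := by
    intro i hiI hne
    constructor
    · intro hai
      by_contra h
      have h' : a' i = false := by simpa using h
      have hmem : i ∈ I.filter (fun i => a i = true ∧ a' i = false) :=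
        Finset.mem_filter.mpr ⟨hiI, hai, h'⟩
      rw [hi0] at hmem
      exact absurd (Finset.mem_singleton.mp hmem) hne
    · exact hdom i hiI
  set Ca := (Finset.univ.powersetCard k).filter
      (fun s : Finset (Fin n) => ∀ i ∈ I, (i ∈ s ↔ a i = true)) with hCadef
  set Ca' := (Finset.univ.powersetCard k).filter
      (fun s : Finset (Fin n) => ∀ i ∈ I, (i ∈ s ↔ a' i = true)) with hCa'def
  have memCa : ∀ s, s ∈ Ca ↔ (s.card = k ∧ ∀ i ∈ I, (i ∈ s ↔ a i = true)) := by
    intro s; simp [hCadef, Finset.mem_powersetCard_univ]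
  have memCa' : ∀ s, s ∈ Ca' ↔ (s.card = k ∧ ∀ i ∈ I, (i ∈ s ↔ a' i = true)) := by
    intro s; simp [hCa'def, Finset.mem_powersetCard_univ]
  -- insertion lemma: Ca → Ca'
  have hins : ∀ s ∈ Ca, ∀ j, j ∉ s → j ∉ I → insert j (s.erase i0) ∈ Ca' := by
    intro s hs j hjs hjI
    obtain ⟨hsk, hsmem⟩ := (memCa s).mp hs
    have hi0s : i0 ∈ s := (hsmem i0 hi0I).mpr hai0
    have hkpos : 0 < k := hsk ▸ Finset.card_pos.mpr ⟨i0, hi0s⟩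
    rw [memCa']
    constructor
    · rw [Finset.card_insert_of_notMem (fun h => hjs (Finset.mem_of_mem_erase h)),
        Finset.card_erase_of_mem hi0s, hsk]
      omega
    · intro i hiI
      have hij : i ≠ j := fun h => hjI (h ▸ hiI)
      rw [Finset.mem_insert, Finset.mem_erase]
      by_cases hi : i = i0
      · subst hi; simp [hij, ha'i0]
      · simp [hij, hi, hsmem i hiI, hagree i hiI hi]
  -- extraction lemma
  have hext : ∀ s ∈ Ca, ∀ s' ∈ Ca', s.erase i0 ⊆ s' →
      ∃ j, j ∉ s ∧ j ∉ I ∧ s' = insert j (s.erase i0) := by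
    intro s hs s' hs' hsub
    obtain ⟨hsk, hsmem⟩ := (memCa s).mp hs
    obtain ⟨hs'k, hs'mem⟩ := (memCa' s').mp hs'
    have hi0s : i0 ∈ s := (hsmem i0 hi0I).mpr hai0
    have hkpos : 0 < k := hsk ▸ Finset.card_pos.mpr ⟨i0, hi0s⟩
    have hi0s' : i0 ∉ s' := fun h => by simpa [ha'i0] using (hs'mem i0 hi0I).mp h
    have hcard1 : (s' \ s.erase i0).card = 1 := by
      rw [Finset.card_sdiff_of_subset hsub, Finset.card_erase_of_mem hi0s, hsk, hs'k]
      omega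
    obtain ⟨j, hj⟩ := Finset.card_eq_one.mp hcard1
    have hj2 : j ∈ s' \ s.erase i0 := hj ▸ Finset.mem_singleton_self j
    rw [Finset.mem_sdiff] at hj2
    have hjne : j ≠ i0 := fun h => hi0s' (h ▸ hj2.1)
    have hjI : j ∉ I := by
      intro hjI
      have haj : a j = true := hdom j hjI ((hs'mem j hjI).mp hj2.1)
      exact hj2.2 (Finset.mem_erase.mpr ⟨hjne, (hsmem j hjI).mpr haj⟩)
    have hjs : j ∉ s := fun hjs => hj2.2 (Finset.mem_erase.mpr ⟨hjne, hjs⟩)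
    refine ⟨j, hjs, hjI, ?_⟩
    apply Finset.Subset.antisymm
    · intro x hx
      by_cases hxe : x ∈ s.erase i0
      · exact Finset.mem_insert_of_mem hxe
      · have hxm : x ∈ s' \ s.erase i0 := Finset.mem_sdiff.mpr ⟨hx, hxe⟩
        rw [hj, Finset.mem_singleton] at hxm
        exact hxm ▸ Finset.mem_insert_self _ _
    · intro x hx
      rcases Finset.mem_insert.mp hx with h | h
      · exact h ▸ hj2.1
      · exact hsub h
  -- insertion lemma: Ca' → Ca
  have hins' : ∀ s' ∈ Ca', ∀ j ∈ s', j ∉ I → insert i0 (s'.erase j) ∈ Ca := by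
    intro s' hs' j hjs' hjI
    obtain ⟨hs'k, hs'mem⟩ := (memCa' s').mp hs'
    have hi0s' : i0 ∉ s' := fun h => by simpa [ha'i0] using (hs'mem i0 hi0I).mp h
    have hkpos : 0 < k := hs'k ▸ Finset.card_pos.mpr ⟨j, hjs'⟩
    rw [memCa]
    constructor
    · rw [Finset.card_insert_of_notMem (fun h => hi0s' (Finset.mem_of_mem_erase h)),
        Finset.card_erase_of_mem hjs', hs'k]
      omega
    · intro i hiI
      have hij : i ≠ j := fun h => hjI (h ▸ hiI)
      rw [Finset.mem_insert, Finset.mem_erase]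
      by_cases hi : i = i0
      · subst hi; simp [hai0]
      · simp [hij, hi, hs'mem i hiI, (hagree i hiI hi).symm]
  -- the coupling set
  set E := (Ca ×ˢ Ca').filter (fun p => p.1.erase i0 ⊆ p.2) with hEdef
  have memE : ∀ p : Finset (Fin n) × Finset (Fin n),
      p ∈ E ↔ p.1 ∈ Ca ∧ p.2 ∈ Ca' ∧ p.1.erase i0 ⊆ p.2 := by
    intro p
    rw [hEdef, Finset.mem_filter, Finset.mem_product, and_assoc]
  -- intersection with I is fixed
  have hSI : ∀ s ∈ Ca, s ∩ I = I.filter (fun i => a i = true) := by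
    intro s hs
    obtain ⟨_, hsmem⟩ := (memCa s).mp hs
    ext i
    rw [Finset.mem_inter, Finset.mem_filter]
    constructor
    · rintro ⟨his, hiI⟩; exact ⟨hiI, (hsmem i hiI).mp his⟩
    · rintro ⟨hiI, hai⟩; exact ⟨(hsmem i hiI).mpr hai, hiI⟩
  have hSI' : ∀ s ∈ Ca', s ∩ I = I.filter (fun i => a' i = true) := by
    intro s hs
    obtain ⟨_, hsmem⟩ := (memCa' s).mp hs
    ext i
    rw [Finset.mem_inter, Finset.mem_filter]
    constructor
    · rintro ⟨his, hiI⟩; exact ⟨hiI, (hsmem i hiI).mp his⟩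
    · rintro ⟨hiI, hai⟩; exact ⟨(hsmem i hiI).mpr hai, hiI⟩
  -- constant degree values
  have hconst1 : ∀ s ∈ Ca, ∀ t ∈ Ca, (sᶜ \ I).card = (tᶜ \ I).card := by
    intro s hs t ht
    have e1 : ∀ u : Finset (Fin n), uᶜ \ I = (u ∪ I)ᶜ := by
      intro u; ext x; simp [not_or]
    have h2 := Finset.card_union_add_card_inter s I
    have h3 := Finset.card_union_add_card_inter t I
    rw [hSI s hs] at h2
    rw [hSI t ht] at h3
    rw [e1, e1, Finset.card_compl, Finset.card_compl, Fintype.card_fin]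
    have hsk := ((memCa s).mp hs).1
    have htk := ((memCa t).mp ht).1
    omega
  have hconst2 : ∀ s ∈ Ca', ∀ t ∈ Ca', (s \ I).card = (t \ I).card := by
    intro s hs t ht
    have h2 := Finset.card_inter_add_card_sdiff s I
    have h3 := Finset.card_inter_add_card_sdiff t I
    rw [hSI' s hs] at h2
    rw [hSI' t ht] at h3
    have hsk := ((memCa' s).mp hs).1
    have htk := ((memCa' t).mp ht).1
    omega
  obtain ⟨s₀, hs₀⟩ := hCa
  obtain ⟨t₀, ht₀⟩ := hCa'
  set m : ℕ := (s₀ᶜ \ I).card with hmdef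
  set m' : ℕ := (t₀ \ I).card with hm'def
  have hs₀mem := ((memCa s₀).mp hs₀).2
  have ht₀mem := ((memCa' t₀).mp ht₀).2
  have hi0s₀ : i0 ∈ s₀ := (hs₀mem i0 hi0I).mpr hai0
  have hi0t₀ : i0 ∉ t₀ := fun h => by simpa [ha'i0] using (ht₀mem i0 hi0I).mp h
  have hnsub : ¬ (t₀ ⊆ s₀) := by
    intro hsub
    have hc : s₀.card ≤ t₀.card := by
      rw [((memCa s₀).mp hs₀).1, ((memCa' t₀).mp ht₀).1]
    have := Finset.eq_of_subset_of_card_le hsub hc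
    exact hi0t₀ (this ▸ hi0s₀)
  have hm : m ≠ 0 := by
    intro h
    rw [hmdef, Finset.card_eq_zero] at h
    apply hnsub
    intro x hx
    by_cases hxI : x ∈ I
    · exact (hs₀mem x hxI).mpr (hdom x hxI ((ht₀mem x hxI).mp hx))
    · by_contra hxs
      have hxm : x ∈ s₀ᶜ \ I := Finset.mem_sdiff.mpr ⟨Finset.mem_compl.mpr hxs, hxI⟩
      rw [h] at hxm
      exact absurd hxm (Finset.notMem_empty x)
  have hm' : m' ≠ 0 := by
    intro h
    rw [hm'def, Finset.card_eq_zero] at h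
    apply hnsub
    intro x hx
    by_cases hxI : x ∈ I
    · exact (hs₀mem x hxI).mpr (hdom x hxI ((ht₀mem x hxI).mp hx))
    · have hxm : x ∈ t₀ \ I := Finset.mem_sdiff.mpr ⟨hx, hxI⟩
      rw [h] at hxm
      exact absurd hxm (Finset.notMem_empty x)
  -- E is nonempty
  have hEne : E.Nonempty := by
    obtain ⟨j, hj⟩ := Finset.card_pos.mp (Nat.pos_of_ne_zero hm)
    rw [Finset.mem_sdiff, Finset.mem_compl] at hj
    exact ⟨(s₀, insert j (s₀.erase i0)),
      (memE _).mpr ⟨hs₀, hins s₀ hs₀ j hj.1 hj.2, Finset.subset_insert _ _⟩⟩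
  -- fiber over fst
  have hfib1 : ∀ s ∈ Ca, E.filter (fun p => p.1 = s)
      = (sᶜ \ I).image (fun j => (s, insert j (s.erase i0))) := by
    intro s hs
    ext ⟨s1, s2⟩
    simp only [Finset.mem_filter, Finset.mem_image]
    constructor
    · rintro ⟨hpE, rfl⟩
      rw [memE] at hpE
      obtain ⟨hp1, hp2, hsub⟩ := hpE
      obtain ⟨j, hjs, hjI, hj⟩ := hext s1 hp1 s2 hp2 hsub
      exact ⟨j, Finset.mem_sdiff.mpr ⟨Finset.mem_compl.mpr hjs, hjI⟩, by rw [← hj]⟩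
    · rintro ⟨j, hjmem, heq⟩
      rw [Finset.mem_sdiff, Finset.mem_compl] at hjmem
      injection heq with h1 h2
      subst h1; subst h2
      exact ⟨(memE _).mpr ⟨hs, hins s hs j hjmem.1 hjmem.2, Finset.subset_insert _ _⟩, rfl⟩
  -- fiber over snd
  have hfib2 : ∀ s' ∈ Ca', E.filter (fun p => p.2 = s')
      = (s' \ I).image (fun j => (insert i0 (s'.erase j), s')) := by
    intro s' hs'
    have hi0s' : i0 ∉ s' := fun h => by
      simpa [ha'i0] using (((memCa' s').mp hs').2 i0 hi0I).mp h
    ext ⟨s1, s2⟩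
    simp only [Finset.mem_filter, Finset.mem_image]
    constructor
    · rintro ⟨hpE, rfl⟩
      rw [memE] at hpE
      obtain ⟨hp1, hp2, hsub⟩ := hpE
      obtain ⟨j, hjs, hjI, hj⟩ := hext s1 hp1 s2 hp2 hsub
      have hi0s1 : i0 ∈ s1 := ((((memCa s1).mp hp1).2) i0 hi0I).mpr hai0
      have hjmem : j ∈ s2 \ I := by
        rw [Finset.mem_sdiff, hj]
        exact ⟨Finset.mem_insert_self _ _, hjI⟩
      refine ⟨j, hjmem, ?_⟩
      have herase : s2.erase j = s1.erase i0 := by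
        rw [hj, Finset.erase_insert (fun h => hjs (Finset.mem_of_mem_erase h))]
      rw [herase, Finset.insert_erase hi0s1]
    · rintro ⟨j, hjmem, heq⟩
      rw [Finset.mem_sdiff] at hjmem
      injection heq with h1 h2
      subst h1; subst h2
      have hsubs : (insert i0 (s'.erase j)).erase i0 ⊆ s' := by
        rw [Finset.erase_insert (fun h => hi0s' (Finset.mem_of_mem_erase h))]
        exact Finset.erase_subset _ _
      exact ⟨(memE _).mpr ⟨hins' s' hs' j hjmem.1 hjmem.2, hs', hsubs⟩, rfl⟩
  -- fiber cardinalities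
  have hdeg1 : ∀ s ∈ Ca, (E.filter (fun p => Prod.fst p = s)).card = m := by
    intro s hs
    rw [hfib1 s hs, Finset.card_image_of_injOn, hmdef]
    · exact hconst1 s hs s₀ hs₀
    · intro j1 h1 j2 h2 heq
      rw [Finset.mem_coe, Finset.mem_sdiff, Finset.mem_compl] at h1
      injection heq with _ h2'
      have hj1 : j1 ∈ insert j2 (s.erase i0) := h2' ▸ Finset.mem_insert_self j1 _
      rcases Finset.mem_insert.mp hj1 with h | h
      · exact h
      · exact absurd (Finset.mem_of_mem_erase h) h1.1
  have hdeg2 : ∀ s' ∈ Ca', (E.filter (fun p => Prod.snd p = s')).card = m' := by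
    intro s' hs'
    have hi0s' : i0 ∉ s' := fun h => by
      simpa [ha'i0] using (((memCa' s').mp hs').2 i0 hi0I).mp h
    rw [hfib2 s' hs', Finset.card_image_of_injOn, hm'def]
    · exact hconst2 s' hs' t₀ ht₀
    · intro j1 h1 j2 h2 heq
      rw [Finset.mem_coe, Finset.mem_sdiff] at h1 h2
      injection heq with h1' _
      have he : s'.erase j1 = s'.erase j2 := by
        have e1 : (insert i0 (s'.erase j1)).erase i0 = s'.erase j1 :=
          Finset.erase_insert (fun h => hi0s' (Finset.mem_of_mem_erase h))
        have e2 : (insert i0 (s'.erase j2)).erase i0 = s'.erase j2 :=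
          Finset.erase_insert (fun h => hi0s' (Finset.mem_of_mem_erase h))
        rw [← e1, ← e2, h1']
      by_contra hne
      exact (Finset.notMem_erase j1 s') (he ▸ Finset.mem_erase.mpr ⟨hne, h1.1⟩)
  -- assemble
  refine ⟨PMF.uniformOfFinset E hEne, ?_, ?_, ?_⟩
  · exact uniform_map_of_const_fiber E Ca Prod.fst m hm hEne ⟨s₀, hs₀⟩
      (fun p hp => ((memE p).mp hp).1) hdeg1
  · exact uniform_map_of_const_fiber E Ca' Prod.snd m' hm' hEne ⟨t₀, ht₀⟩
      (fun p hp => ((memE p).mp hp).2.1) hdeg2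
  · intro p hp
    rw [PMF.support_uniformOfFinset, Finset.mem_coe] at hp
    rw [memE] at hp
    obtain ⟨hp1, hp2, hsub⟩ := hp
    obtain ⟨j, hjs, hjI, hj⟩ := hext p.1 hp1 p.2 hp2 hsub
    constructor
    · intro x hx
      rw [Finset.mem_sdiff] at hx ⊢
      refine ⟨?_, hx.2⟩
      have hxne : x ≠ i0 := fun h => hx.2 (h ▸ hi0I)
      exact hsub (Finset.mem_erase.mpr ⟨hxne, hx.1⟩)
    · have hsub2 : p.2 \ I ⊆ insert j (p.1 \ I) := by
        intro x hx
        rw [Finset.mem_sdiff, hj] at hx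
        rcases Finset.mem_insert.mp hx.1 with h | h
        · exact h ▸ Finset.mem_insert_self _ _
        · exact Finset.mem_insert_of_mem
            (Finset.mem_sdiff.mpr ⟨Finset.mem_of_mem_erase h, hx.2⟩)
      calc (p.2 \ I).card ≤ (insert j (p.1 \ I)).card := Finset.card_le_card hsub2
        _ ≤ (p.1 \ I).card + 1 := Finset.card_insert_le _ _
end

section
/- Consider the query release game with payoff A(x,q) = q(S) − q(x) for x ∈ X, q ∈ Q̄, where Q̄ is closed under negation (q ∈ Q̄ implies ¬q ∈ Q̄ with ¬q(x) = 1 − q(x)) and S ∈ X^n. Let (Ŝ, W) ∈ Δ(X) × Δ(Q̄) be an α-approximate minimax equilibrium, i.e. max_{q∈Q̄} A(Ŝ, q) ≤ V + α and min_{x∈X} A(x, W) ≥ V − α, where V is the value of the game. Then V = 0 and for every q ∈ Q̄, |q(S) − q(Ŝ)| ≤ α, where q(Ŝ) = E_{x∼Ŝ}[q(x)]. -/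
/-- the query release game with payoff `A(x,q) = q(S) - q(x)`, where the
query class `Q̄` is closed under negation, has value `V = 0`, and at any `α`-approximate
minimax equilibrium `(Ŝ, W)` the Data player's mixed strategy `Ŝ` answers every query
in `Q̄` up to additive error `α`: `|q(S) - q(Ŝ)| ≤ α`. -/
theorem stmt16 {X : Type*} [Fintype X] (n : ℕ) (hn : 1 ≤ n) (S : Fin n → X)
    (Qbar : Finset (X → Bool)) (hQne : Qbar.Nonempty)
    (hneg : ∀ q ∈ Qbar, (fun x => !(q x)) ∈ Qbar)
    (α : ℝ) (hα : 0 ≤ α)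
    (Shat : X → ℝ) (hS0 : ∀ x, 0 ≤ Shat x) (hS1 : ∑ x, Shat x = 1)
    (W : (X → Bool) → ℝ) (hW0 : ∀ q, 0 ≤ W q) (hW1 : ∑ q ∈ Qbar, W q = 1)
    (V : ℝ)
    (hV : V = sInf { v : ℝ | ∃ p : X → ℝ, (∀ x, 0 ≤ p x) ∧ (∑ x, p x) = 1 ∧
      v = Qbar.sup' hQne fun q =>
        (∑ i, (if q (S i) then (1 : ℝ) else 0)) / n -
          ∑ x, p x * (if q x then (1 : ℝ) else 0) })
    (heq1 : (Qbar.sup' hQne fun q =>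
        (∑ i, (if q (S i) then (1 : ℝ) else 0)) / n -
          ∑ x, Shat x * (if q x then (1 : ℝ) else 0)) ≤ V + α)
    (heq2 : ∀ x : X, V - α ≤ ∑ q ∈ Qbar, W q *
        ((∑ i, (if q (S i) then (1 : ℝ) else 0)) / n - (if q x then (1 : ℝ) else 0))) :
    V = 0 ∧ ∀ q ∈ Qbar,
      |(∑ i, (if q (S i) then (1 : ℝ) else 0)) / n -
          ∑ x, Shat x * (if q x then (1 : ℝ) else 0)| ≤ α := by
  classical
  have hn0 : (n : ℝ) ≠ 0 := by positivity
  set f : (X → ℝ) → (X → Bool) → ℝ := fun p q =>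
      (∑ i, (if q (S i) then (1 : ℝ) else 0)) / n -
        ∑ x, p x * (if q x then (1 : ℝ) else 0) with hf
  -- negation flips the payoff
  have hflip : ∀ (p : X → ℝ), (∑ x, p x) = 1 → ∀ q : X → Bool,
      f p (fun x => !(q x)) = - f p q := by
    intro p hp q
    have h1 : (∑ i, (if !(q (S i)) then (1 : ℝ) else 0))
        = (n : ℝ) - ∑ i, (if q (S i) then (1 : ℝ) else 0) := by
      have e : ∀ i : Fin n, (if !(q (S i)) then (1 : ℝ) else 0)
          = 1 - (if q (S i) then (1 : ℝ) else 0) := by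
        intro i; cases hqi : q (S i) <;> simp [hqi]
      rw [Finset.sum_congr rfl fun i _ => e i, Finset.sum_sub_distrib]
      simp
    have h2 : (∑ x, p x * (if !(q x) then (1 : ℝ) else 0))
        = 1 - ∑ x, p x * (if q x then (1 : ℝ) else 0) := by
      have e : ∀ x : X, p x * (if !(q x) then (1 : ℝ) else 0)
          = p x - p x * (if q x then (1 : ℝ) else 0) := by
        intro x; cases hqx : q x <;> simp [hqx]
      rw [Finset.sum_congr rfl fun x _ => e x, Finset.sum_sub_distrib, hp]
    simp only [hf, h1, h2]
    field_simp
    ring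
  -- every achievable value is ≥ 0
  have hge : ∀ v ∈ { v : ℝ | ∃ p : X → ℝ, (∀ x, 0 ≤ p x) ∧ (∑ x, p x) = 1 ∧
      v = Qbar.sup' hQne (f p) }, (0 : ℝ) ≤ v := by
    rintro v ⟨p, hp0, hp1, rfl⟩
    obtain ⟨q, hq⟩ := hQne
    have h1 := Finset.le_sup' (f p) hq
    have h2 := Finset.le_sup' (f p) (hneg q hq)
    rw [hflip p hp1 q] at h2
    linarith
  -- the empirical distribution achieves 0
  have hmem : (0 : ℝ) ∈ { v : ℝ | ∃ p : X → ℝ, (∀ x, 0 ≤ p x) ∧ (∑ x, p x) = 1 ∧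
      v = Qbar.sup' hQne (f p) } := by
    refine ⟨fun x => (∑ i, (if S i = x then (1 : ℝ) else 0)) / n, ?_, ?_, ?_⟩
    · intro x; positivity
    · rw [← Finset.sum_div, Finset.sum_comm]
      have : ∀ i : Fin n, ∑ x, (if S i = x then (1 : ℝ) else 0) = 1 := by
        intro i; simp
      simp [this, hn0]
    · have hz : ∀ q ∈ Qbar,
          f (fun x => (∑ i, (if S i = x then (1 : ℝ) else 0)) / n) q = 0 := by
        intro q _
        have key : (∑ x, ((∑ i, (if S i = x then (1 : ℝ) else 0)) / n)
            * (if q x then (1 : ℝ) else 0))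
            = (∑ i, (if q (S i) then (1 : ℝ) else 0)) / n := by
          rw [Finset.sum_congr rfl
            (fun x _ => div_mul_eq_mul_div (∑ i, (if S i = x then (1 : ℝ) else 0))
              (n : ℝ) (if q x then (1 : ℝ) else 0)), ← Finset.sum_div]
          congr 1
          rw [Finset.sum_congr rfl (fun x _ => Finset.sum_mul ..), Finset.sum_comm]
          refine Finset.sum_congr rfl fun i _ => ?_
          have e2 : ∀ x : X, (if S i = x then (1 : ℝ) else 0) * (if q x then (1 : ℝ) else 0)
              = if S i = x then (if q x then (1 : ℝ) else 0) else 0 := by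
            intro x; by_cases h : S i = x <;> simp [h]
          rw [Finset.sum_congr rfl fun x _ => e2 x, Finset.sum_ite_eq]
          simp
        simp only [hf]
        rw [key, sub_self]
      have e := Finset.sup'_congr hQne rfl hz
      rw [e, Finset.sup'_const]
  have hV0 : V = 0 := by
    rw [hV]
    exact le_antisymm (csInf_le ⟨0, fun v hv => hge v hv⟩ hmem) (le_csInf ⟨0, hmem⟩ hge)
  refine ⟨hV0, fun q hq => ?_⟩
  rw [hV0, zero_add] at heq1
  have h1 := (Finset.le_sup' (f Shat) hq).trans heq1
  have h2 := (Finset.le_sup' (f Shat) (hneg q hq)).trans heq1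
  rw [hflip Shat hS1 q] at h2
  show |f Shat q| ≤ α
  rw [abs_le]
  exact ⟨by linarith, h1⟩
end

section
/- (Be-the-perturbed-leader stability) Let ℓ^1, ..., ℓ^T ∈ R^d be loss vectors, Z^0 = 0, and Z^1, ..., Z^T ∈ R^d arbitrary perturbation vectors, with each ℓ^t ∈ [0,1]^d. With M as the exact-minimizer indicator map and ℓ^{1:t} = Σ_{j≤t} ℓ^j, it holds that Σ_{t=1}^T M(ℓ^{1:t} + Z^t)·ℓ^t ≤ M(ℓ^{1:T})·ℓ^{1:T} + 2 Σ_{t=1}^T ||Z^t − Z^{t−1}||_∞. -/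
open Finset

/-- be-the-perturbed-leader stability. For loss vectors `ℓ^t ∈ [0,1]^d`,
arbitrary perturbations `Z^t` with `Z^0 = 0`, and `M` any exact-minimizer selector,
the perturbed-leader total loss exceeds the best fixed coordinate in hindsight by at
most `2 Σ_t ‖Z^t - Z^{t-1}‖_∞`. -/
theorem stmt18 (d T : ℕ) (ℓ : ℕ → Fin d → ℝ) (Z : ℕ → Fin d → ℝ)
    (hℓ : ∀ t i, ℓ t i ∈ Set.Icc (0 : ℝ) 1) (hZ0 : Z 0 = 0)
    (M : (Fin d → ℝ) → Fin d) (hM : ∀ (v : Fin d → ℝ) (i : Fin d), v (M v) ≤ v i) :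
    (∑ t ∈ Finset.range T,
        ℓ t (M fun i => (∑ j ∈ Finset.range (t + 1), ℓ j i) + Z (t + 1) i)) ≤
      (∑ j ∈ Finset.range T, ℓ j (M fun i => ∑ j' ∈ Finset.range T, ℓ j' i)) +
        2 * ∑ t ∈ Finset.range T, ‖Z (t + 1) - Z t‖ := by
  -- modified losses
  set lhat : ℕ → Fin d → ℝ := fun t i => ℓ t i + (Z (t + 1) i - Z t i) with hlhat
  have hLfun : ∀ n i, ∑ j ∈ range n, lhat j i = (∑ j ∈ range n, ℓ j i) + Z n i := by
    intro n i
    simp only [hlhat]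
    rw [Finset.sum_add_distrib, Finset.sum_range_sub (fun j => Z j i)]
    simp [hZ0]
  -- be-the-leader lemma for the modified losses
  have btl : ∀ n, ∑ t ∈ range n, lhat t (M fun i => ∑ j ∈ range (t + 1), lhat j i)
      ≤ ∑ t ∈ range n, lhat t (M fun i => ∑ j ∈ range n, lhat j i) := by
    intro n
    induction n with
    | zero => simp
    | succ n ih =>
      rw [Finset.sum_range_succ, Finset.sum_range_succ]
      have h1 : ∑ t ∈ range n, lhat t (M fun i => ∑ j ∈ range n, lhat j i)
          ≤ ∑ t ∈ range n, lhat t (M fun i => ∑ j ∈ range (n + 1), lhat j i) := by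
        simpa using hM (fun i => ∑ j ∈ range n, lhat j i)
          (M fun i => ∑ j ∈ range (n + 1), lhat j i)
      linarith
  -- the argument of M in the goal equals the cumulative modified loss
  have harg : ∀ n, (fun i => (∑ j ∈ range n, ℓ j i) + Z n i)
      = (fun i => ∑ j ∈ range n, lhat j i) := by
    intro n; funext i; rw [hLfun]
  -- pointwise bound: ℓ t x ≤ lhat t x + ‖Z (t+1) - Z t‖
  have hpt : ∀ t (x : Fin d), ℓ t x ≤ lhat t x + ‖Z (t + 1) - Z t‖ := by
    intro t x
    have h := norm_le_pi_norm (Z (t + 1) - Z t) x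
    simp only [Pi.sub_apply, Real.norm_eq_abs] at h
    have := abs_le.mp h
    simp only [hlhat]
    linarith [this.1]
  set b := M fun i => ∑ j ∈ range T, lhat j i with hb
  set istar := M fun i => ∑ j' ∈ range T, ℓ j' i with histar
  have step1 : (∑ t ∈ range T,
      ℓ t (M fun i => (∑ j ∈ range (t + 1), ℓ j i) + Z (t + 1) i))
      ≤ (∑ t ∈ range T, lhat t (M fun i => ∑ j ∈ range (t + 1), lhat j i))
        + ∑ t ∈ range T, ‖Z (t + 1) - Z t‖ := by
    rw [← Finset.sum_add_distrib]
    apply Finset.sum_le_sum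
    intro t _
    rw [harg (t + 1)]
    exact hpt t _
  have step2 : ∑ t ∈ range T, lhat t b ≤ ∑ t ∈ range T, lhat t istar := by
    simpa using hM (fun i => ∑ j ∈ range T, lhat j i) istar
  have step3 : ∑ t ∈ range T, lhat t istar
      = (∑ t ∈ range T, ℓ t istar) + Z T istar := hLfun T istar
  have step4 : Z T istar ≤ ∑ t ∈ range T, ‖Z (t + 1) - Z t‖ := by
    have : Z T istar = ∑ t ∈ range T, (Z (t + 1) istar - Z t istar) := by
      rw [Finset.sum_range_sub (fun j => Z j istar)]
      simp [hZ0]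
    rw [this]
    apply Finset.sum_le_sum
    intro t _
    have h := norm_le_pi_norm (Z (t + 1) - Z t) istar
    simp only [Pi.sub_apply, Real.norm_eq_abs] at h
    linarith [(abs_le.mp h).2, le_abs_self (Z (t + 1) istar - Z t istar)]
  have := btl T
  linarith
end
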